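/- A 2×2 row-stochastic matrix with strictly positive entries is embeddable (i.e., equals exp(Q) for some real 2×2 matrix Q with nonnegative off-diagonal entries and zero row sums) if and only if its determinant is positive. -/

import Mathlib

/-!
Row sums force a 2×2 generator to be `Q = [[-a, a], [b, -b]]` with `a, b ≥ 0`, and a stochastic
matrix to be `P = 1 + [[-p, p], [q, -q]]`, so that `det P = 1 - (p + q)`. Since
`Q² = -(a + b) Q`, the exponential series collapses to
`exp Q = 1 + ((1 - e^{-(a+b)}) / (a + b)) Q`, whose determinant is `e^{-(a+b)} > 0`.
Conversely, if `1 - (p + q) > 0` then `Q = t [[-p, p], [q, -q]]` with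
`t (p + q) = -log (1 - (p + q))` satisfies `exp Q = P`.
-/

open NormedSpace
open scoped Nat

section IdempotentExp

variable {𝕂 𝔸 : Type*} [RCLike 𝕂] [NormedRing 𝔸] [NormedAlgebra 𝕂 𝔸] [CompleteSpace 𝔸]

theorem exp_smul_of_isIdempotentElem {e : 𝔸} (he : IsIdempotentElem e) (c : 𝕂) :
    exp (c • e) = 1 + (exp c - 1) • e := by
  have hterm : ∀ n : ℕ, ((n !⁻¹ : 𝕂) • c ^ n) • e + (if n = 0 then 1 - e else 0)
      = (n !⁻¹ : 𝕂) • (c • e) ^ n := by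
    rintro (_ | n)
    · simp
    · simp [smul_pow, he.pow_succ_eq, smul_smul]
  have hsum := ((exp_series_hasSum_exp' (𝕂 := 𝕂) c).smul_const e).add (hasSum_ite_eq 0 (1 - e))
  simp only [hterm] at hsum
  rw [(exp_series_hasSum_exp' (𝕂 := 𝕂) (c • e)).unique hsum, sub_smul, one_smul]
  abel

theorem exp_eq_of_mul_self_eq_smul {x : 𝔸} {k : 𝕂} (hx : x * x = k • x) (hk : k ≠ 0) :
    exp x = 1 + ((exp k - 1) / k) • x := by
  have he : IsIdempotentElem (k⁻¹ • x) := by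
    rw [IsIdempotentElem, smul_mul_smul_comm, hx, smul_smul, mul_assoc, inv_mul_cancel₀ hk,
      mul_one]
  conv_lhs => rw [← smul_inv_smul₀ hk x]
  rw [exp_smul_of_isIdempotentElem he, smul_smul, div_eq_mul_inv]

end IdempotentExp

def twoStateGenerator {R : Type*} [Ring R] (a b : R) : Matrix (Fin 2) (Fin 2) R :=
  !![-a, a; b, -b]

namespace twoStateGenerator

section CommRing

variable {R : Type*} [CommRing R] (a b : R)

theorem mul_self :
    twoStateGenerator a b * twoStateGenerator a b = (-(a + b)) • twoStateGenerator a b := by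
  ext i j
  fin_cases i <;> fin_cases j <;> simp [twoStateGenerator, Matrix.mul_apply] <;> ring

theorem smul (c : R) : c • twoStateGenerator a b = twoStateGenerator (c * a) (c * b) := by
  ext i j
  fin_cases i <;> fin_cases j <;> simp [twoStateGenerator]

theorem det_one_add : (1 + twoStateGenerator a b).det = 1 - (a + b) := by
  simp [twoStateGenerator, Matrix.det_fin_two]
  ring

theorem sum_apply (i : Fin 2) : ∑ j, twoStateGenerator a b i j = 0 := by
  fin_cases i <;> simp [twoStateGenerator, Fin.sum_univ_two]

theorem eq_of_sum_eq_zero {Q : Matrix (Fin 2) (Fin 2) R} (hQ : ∀ i, ∑ j, Q i j = 0) :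
    Q = twoStateGenerator (Q 0 1) (Q 1 0) := by
  have h0 := hQ 0
  have h1 := hQ 1
  simp only [Fin.sum_univ_two] at h0 h1
  ext i j
  fin_cases i <;> fin_cases j
  · exact eq_neg_of_add_eq_zero_left h0
  · rfl
  · rfl
  · exact eq_neg_of_add_eq_zero_right h1

theorem eq_one_add_of_sum_eq_one {P : Matrix (Fin 2) (Fin 2) R} (hP : ∀ i, ∑ j, P i j = 1) :
    P = 1 + twoStateGenerator (P 0 1) (P 1 0) := by
  have hQ : ∀ i, ∑ j, (P - 1) i j = 0 := fun i => by
    simp [Matrix.sub_apply, Finset.sum_sub_distrib, hP, Matrix.one_apply]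
  conv_lhs => rw [← add_sub_cancel 1 P, eq_of_sum_eq_zero hQ]
  simp

end CommRing

theorem apply_nonneg_of_ne {R : Type*} [Ring R] [PartialOrder R] {a b : R} (ha : 0 ≤ a)
    (hb : 0 ≤ b) (i j : Fin 2) (hij : i ≠ j) : 0 ≤ twoStateGenerator a b i j := by
  fin_cases i <;> fin_cases j <;> simp_all [twoStateGenerator]

variable {a b : ℝ}

theorem exp_eq (hs : a + b ≠ 0) :
    exp (twoStateGenerator a b)
      = 1 + ((1 - Real.exp (-(a + b))) / (a + b)) • twoStateGenerator a b := by
  -- the matrix `exp` needs no norm; the operator norm only serves to apply the Banach-algebra lemma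
  refine (open scoped Matrix.Norms.Operator in
    exp_eq_of_mul_self_eq_smul (mul_self a b) (neg_ne_zero.2 hs)).trans ?_
  rw [← Real.exp_eq_exp_ℝ, div_neg, ← neg_div, neg_sub]

theorem det_exp (ha : 0 ≤ a) (hb : 0 ≤ b) :
    (exp (twoStateGenerator a b)).det = Real.exp (-(a + b)) := by
  rcases (add_nonneg ha hb).eq_or_lt with hs | hs
  · obtain ⟨rfl, rfl⟩ := (add_eq_zero_iff_of_nonneg ha hb).1 hs.symm
    have h0 : twoStateGenerator (0 : ℝ) 0 = 0 := by
      ext i j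
      fin_cases i <;> fin_cases j <;> simp [twoStateGenerator]
    simp [h0]
  · rw [exp_eq hs.ne', smul, det_one_add]
    field_simp
    ring

theorem exists_exp_eq_one_add (hs : 0 < a + b) (hs1 : a + b < 1) :
    ∃ t, 0 ≤ t ∧ exp (twoStateGenerator (t * a) (t * b)) = 1 + twoStateGenerator a b := by
  obtain ⟨t, ht⟩ : ∃ t, t * (a + b) = -Real.log (1 - (a + b)) :=
    ⟨_, div_mul_cancel₀ _ hs.ne'⟩
  have hts : 0 < t * (a + b) := by
    rw [ht, neg_pos]
    exact Real.log_neg (by linarith) (by linarith)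
  have htpos : 0 < t := (mul_pos_iff_of_pos_right hs).1 hts
  refine ⟨t, htpos.le, ?_⟩
  rw [exp_eq (by rw [← mul_add]; exact hts.ne'), ← mul_add, ht, neg_neg,
    Real.exp_log (by linarith), ← ht, ← smul, smul_smul, sub_sub_cancel, div_mul_eq_mul_div,
    mul_comm, mul_div_mul_left _ _ htpos.ne', div_self hs.ne', one_smul]

end twoStateGenerator

/-- A 2×2 row-stochastic matrix with strictly positive entries is embeddable
(equals `exp Q` for a Markov generator `Q`) iff its determinant is positive. -/
theorem stmt_1 (P : Matrix (Fin 2) (Fin 2) ℝ)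
    (hpos : ∀ i j, 0 < P i j) (hrow : ∀ i, ∑ j, P i j = 1) :
    (∃ Q : Matrix (Fin 2) (Fin 2) ℝ,
        (∀ i j, i ≠ j → 0 ≤ Q i j) ∧ (∀ i, ∑ j, Q i j = 0) ∧
        NormedSpace.exp Q = P) ↔ 0 < P.det := by
  constructor
  · rintro ⟨Q, hoff, hsum, rfl⟩
    rw [twoStateGenerator.eq_of_sum_eq_zero hsum,
      twoStateGenerator.det_exp (hoff 0 1 (by decide)) (hoff 1 0 (by decide))]
    exact Real.exp_pos _
  · intro hdet
    rw [twoStateGenerator.eq_one_add_of_sum_eq_one hrow, twoStateGenerator.det_one_add] at hdet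
    obtain ⟨t, ht, hexp⟩ :=
      twoStateGenerator.exists_exp_eq_one_add (add_pos (hpos 0 1) (hpos 1 0)) (by linarith)
    refine ⟨_, twoStateGenerator.apply_nonneg_of_ne (mul_nonneg ht (hpos 0 1).le)
      (mul_nonneg ht (hpos 1 0).le), twoStateGenerator.sum_apply _ _, ?_⟩
    rw [hexp, ← twoStateGenerator.eq_one_add_of_sum_eq_one hrow]
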